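/- Let k be a positive integer and for each i ∈ {1,…,k} let P_i and Q_i be discrete probability distributions on a countable set A_i with equal support, such that D_subG(P_i‖Q_i) ⪯ (μ_i, τ_i). Then the product distributions P = P₁ ⊗ ⋯ ⊗ P_k and Q = Q₁ ⊗ ⋯ ⊗ Q_k on A₁ × ⋯ × A_k satisfy D_subG(P‖Q) ⪯ (μ₁+⋯+μ_k, sqrt(τ₁²+⋯+τ_k²)). -/

import Mathlib

open MeasureTheory
open scoped ENNReal

noncomputable def KL {α : Type*} (P Q : PMF α) : ℝ :=
  ∑' x, (P x).toReal * Real.log ((P x).toReal / (Q x).toReal)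

def DsubG {α : Type*} (P Q : PMF α) (μ τ : ℝ) : Prop :=
  KL P Q ≤ μ ∧
  ∀ l : ℝ,
    (∑' x, (P x).toReal *
        Real.exp (l * (Real.log ((P x).toReal / (Q x).toReal) - KL P Q)))
      ≤ Real.exp (l ^ 2 * τ ^ 2 / 2)

/-!
Almost surely under the product measure, the privacy loss of the product is the sum of the
coordinate losses, which are independent; so the moment generating functions multiply and the
expectations add. The junk values of `tsum` need care: if some coordinate loss is not integrable,
the product `KL` is `0`, and for `l > 0` the MGF of that coordinate vanishes (a loss with
integrable negative part is integrable as soon as `exp (l * loss)` is), so the bound degenerates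
consistently.
-/

open ProbabilityTheory Real

namespace PMF

variable {α : Type*}

theorem summable_toReal (p : PMF α) : Summable fun a => (p a).toReal :=
  ENNReal.summable_toReal p.tsum_coe_ne_top

theorem tsum_toReal (p : PMF α) : ∑' a, (p a).toReal = 1 := by
  rw [← ENNReal.tsum_toReal_eq p.apply_ne_top, p.tsum_coe, ENNReal.toReal_one]

variable [MeasurableSpace α] [MeasurableSingletonClass α] [Countable α]

theorem toMeasure_eq_sum_dirac (p : PMF α) :
    p.toMeasure = Measure.sum fun a => p a • Measure.dirac a := by
  conv_lhs => rw [← p.toMeasure.sum_smul_dirac]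
  simp_rw [p.toMeasure_apply_singleton _ (measurableSet_singleton _)]

theorem integrable_iff_summable (p : PMF α) (f : α → ℝ) :
    Integrable f p.toMeasure ↔ Summable fun a => (p a).toReal * f a := by
  rw [toMeasure_eq_sum_dirac, integrable_sum_dirac_iff fun a => p.apply_ne_top a,
    ← summable_abs_iff (f := fun a => (p a).toReal * f a)]
  simp_rw [abs_mul, ENNReal.abs_toReal, Real.norm_eq_abs]

theorem tsum_toReal_mul_eq_integral (p : PMF α) (f : α → ℝ) :
    ∑' a, (p a).toReal * f a = ∫ a, f a ∂p.toMeasure := by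
  by_cases hf : Integrable f p.toMeasure
  · exact (p.integral_eq_tsum f hf).symm
  · rw [integral_undef hf,
      tsum_eq_zero_of_not_summable ((p.integrable_iff_summable f).not.mp hf)]

theorem ae_apply_ne_zero (p : PMF α) : ∀ᵐ a ∂p.toMeasure, p a ≠ 0 := by
  rw [ae_iff, p.toMeasure_apply_eq_zero_iff (Set.to_countable _).measurableSet]
  exact Set.disjoint_left.mpr fun a ha hna => hna ((p.mem_support_iff a).mp ha)

end PMF

section Integrability

variable {Ω : Type*} [MeasurableSpace Ω] {μ : Measure Ω}

theorem integrable_of_integrable_exp_mul_of_negPart {X : Ω → ℝ} {l : ℝ} (hl : 0 < l)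
    (hX : AEStronglyMeasurable X μ) (hexp : Integrable (fun ω => exp (l * X ω)) μ)
    (hneg : Integrable (fun ω => max (-X ω) 0) μ) : Integrable X μ := by
  refine ((hexp.div_const l).add hneg).mono' hX (ae_of_all _ fun ω => ?_)
  simp only [Pi.add_apply, Real.norm_eq_abs]
  rcases le_total 0 (X ω) with h | h
  · have hle : X ω ≤ exp (l * X ω) / l := by
      rw [le_div_iff₀ hl, mul_comm]
      linarith [add_one_le_exp (l * X ω)]
    rw [abs_of_nonneg h]
    linarith [le_max_right (-X ω) 0]
  · rw [abs_of_nonpos h]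
    linarith [le_max_left (-X ω) 0, div_nonneg (exp_pos (l * X ω)).le hl.le]

theorem integrable_of_integrable_sum_of_negPart {ι : Type*} {s : Finset ι} {X : ι → Ω → ℝ}
    (hsum : Integrable (fun ω => ∑ j ∈ s, X j ω) μ)
    (hneg : ∀ j ∈ s, Integrable (fun ω => max (-X j ω) 0) μ)
    {i : ι} (hi : i ∈ s) (hX : AEStronglyMeasurable (X i) μ) : Integrable (X i) μ := by
  classical
  refine (hsum.abs.add (integrable_finsetSum s hneg)).mono' hX (ae_of_all _ fun ω => ?_)
  have hsplit := Finset.add_sum_erase s (fun j => X j ω) hi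
  have hneg_le : ∑ j ∈ s.erase i, -X j ω ≤ ∑ j ∈ s, max (-X j ω) 0 :=
    (Finset.sum_le_sum fun j _ => le_max_left _ _).trans
      (Finset.sum_le_sum_of_subset_of_nonneg (Finset.erase_subset i s)
        fun j _ _ => le_max_right _ _)
  have hi_le : max (-X i ω) 0 ≤ ∑ j ∈ s, max (-X j ω) 0 :=
    Finset.single_le_sum (fun j _ => le_max_right (-X j ω) 0) hi
  simp only [Pi.add_apply, Real.norm_eq_abs, Finset.sum_neg_distrib] at hneg_le ⊢
  rw [abs_le]
  constructor <;> linarith [le_abs_self (∑ j ∈ s, X j ω), neg_abs_le (∑ j ∈ s, X j ω),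
    le_max_left (-X i ω) 0]

end Integrability

section PrivacyLoss

variable {α : Type*}

noncomputable def privacyLoss (P Q : PMF α) (y : α) : ℝ :=
  Real.log ((P y).toReal / (Q y).toReal)

theorem sub_le_mul_privacyLoss {P Q : PMF α} (h : P.support ⊆ Q.support) (y : α) :
    (P y).toReal - (Q y).toReal ≤ (P y).toReal * privacyLoss P Q y := by
  rcases eq_or_ne (P y) 0 with hP | hP
  · simp [hP]
  have hQ : Q y ≠ 0 := (PMF.mem_support_iff _ _).1 (h ((PMF.mem_support_iff _ _).2 hP))
  have hp : 0 < (P y).toReal := ENNReal.toReal_pos hP (P.apply_ne_top y)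
  have hq : 0 < (Q y).toReal := ENNReal.toReal_pos hQ (Q.apply_ne_top y)
  calc (P y).toReal - (Q y).toReal
      = (P y).toReal * (1 - ((P y).toReal / (Q y).toReal)⁻¹) := by field_simp
    _ ≤ (P y).toReal * privacyLoss P Q y :=
      mul_le_mul_of_nonneg_left (one_sub_inv_le_log_of_pos (div_pos hp hq)) hp.le

theorem KL_nonneg {P Q : PMF α} (h : P.support ⊆ Q.support) : 0 ≤ KL P Q := by
  by_cases hs : Summable fun y => (P y).toReal * privacyLoss P Q y
  · calc (0 : ℝ) = ∑' y, ((P y).toReal - (Q y).toReal) := by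
          rw [P.summable_toReal.tsum_sub Q.summable_toReal, P.tsum_toReal, Q.tsum_toReal, sub_self]
      _ ≤ KL P Q :=
          (P.summable_toReal.sub Q.summable_toReal).tsum_le_tsum (sub_le_mul_privacyLoss h) hs
  · exact (tsum_eq_zero_of_not_summable hs).ge

variable [MeasurableSpace α] [MeasurableSingletonClass α] [Countable α]

theorem KL_eq_integral (P Q : PMF α) : KL P Q = ∫ y, privacyLoss P Q y ∂P.toMeasure :=
  P.tsum_toReal_mul_eq_integral _

variable {P Q : PMF α}

theorem dsubG_iff {μ τ : ℝ} :
    DsubG P Q μ τ ↔ KL P Q ≤ μ ∧ ∀ l : ℝ,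
      exp (-(l * KL P Q)) * mgf (privacyLoss P Q) P.toMeasure l ≤ exp (l ^ 2 * τ ^ 2 / 2) := by
  refine and_congr_right' (forall_congr' fun l => ?_)
  have hshift : (fun y => privacyLoss P Q y - KL P Q) = fun y => privacyLoss P Q y + -KL P Q :=
    funext fun y => sub_eq_add_neg _ _
  rw [P.tsum_toReal_mul_eq_integral, ← mgf]
  change mgf (fun y => privacyLoss P Q y - KL P Q) P.toMeasure l ≤ _ ↔ _
  rw [hshift, mgf_add_const, mul_comm, mul_neg]

theorem integrable_negPart_privacyLoss (h : P.support ⊆ Q.support) :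
    Integrable (fun y => max (-privacyLoss P Q y) 0) P.toMeasure := by
  rw [P.integrable_iff_summable]
  refine Summable.of_nonneg_of_le (fun y => by positivity) (fun y => ?_) Q.summable_toReal
  rw [mul_max_of_nonneg _ _ ENNReal.toReal_nonneg, mul_zero, mul_neg]
  exact max_le (by linarith [sub_le_mul_privacyLoss h y, (P y).toReal_nonneg])
    ENNReal.toReal_nonneg

theorem integrable_privacyLoss_of_mgf_ne_zero (h : P.support ⊆ Q.support) {l : ℝ} (hl : 0 < l)
    (hmgf : mgf (privacyLoss P Q) P.toMeasure l ≠ 0) :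
    Integrable (privacyLoss P Q) P.toMeasure :=
  integrable_of_integrable_exp_mul_of_negPart hl .of_discrete (not_not.mp (mt mgf_undef hmgf))
    (integrable_negPart_privacyLoss h)

theorem mgf_privacyLoss_le {μ τ : ℝ} (hPQ : DsubG P Q μ τ) (l : ℝ) :
    mgf (privacyLoss P Q) P.toMeasure l ≤ exp (l * KL P Q + l ^ 2 * τ ^ 2 / 2) := by
  have hcentered := (dsubG_iff.mp hPQ).2 l
  calc mgf (privacyLoss P Q) P.toMeasure l
      = exp (l * KL P Q) * (exp (-(l * KL P Q)) * mgf (privacyLoss P Q) P.toMeasure l) := by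
        rw [← mul_assoc, ← exp_add, add_neg_cancel, exp_zero, one_mul]
    _ ≤ exp (l * KL P Q) * exp (l ^ 2 * τ ^ 2 / 2) :=
        mul_le_mul_of_nonneg_left hcentered (exp_pos _).le
    _ = exp (l * KL P Q + l ^ 2 * τ ^ 2 / 2) := (exp_add _ _).symm

end PrivacyLoss

section Product

variable {ι : Type*} [Fintype ι] {A : ι → Type*} [∀ i, Countable (A i)]
  [∀ i, MeasurableSpace (A i)] [∀ i, MeasurableSingletonClass (A i)]

noncomputable def PMF.pi (P : ∀ i, PMF (A i)) : PMF (∀ i, A i) :=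
  (Measure.pi fun i => (P i).toMeasure).toPMF

variable {P Q : ∀ i, PMF (A i)}

theorem prod_mgf_privacyLoss_le {μ τ : ι → ℝ} (h : ∀ i, DsubG (P i) (Q i) (μ i) (τ i))
    (l : ℝ) :
    ∏ i, mgf (privacyLoss (P i) (Q i)) (P i).toMeasure l ≤
      exp (l * ∑ i, KL (P i) (Q i) + l ^ 2 * (∑ i, τ i ^ 2) / 2) :=
  calc ∏ i, mgf (privacyLoss (P i) (Q i)) (P i).toMeasure l
      ≤ ∏ i, exp (l * KL (P i) (Q i) + l ^ 2 * τ i ^ 2 / 2) :=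
        Finset.prod_le_prod (fun i _ => mgf_nonneg) fun i _ => mgf_privacyLoss_le (h i) l
    _ = exp (l * ∑ i, KL (P i) (Q i) + l ^ 2 * (∑ i, τ i ^ 2) / 2) := by
        rw [← exp_sum, Finset.sum_add_distrib, Finset.mul_sum, Finset.mul_sum, Finset.sum_div]

theorem PMF.toMeasure_pi : (PMF.pi P).toMeasure = Measure.pi fun i => (P i).toMeasure :=
  Measure.toPMF_toMeasure _

theorem PMF.pi_apply (x : ∀ i, A i) : PMF.pi P x = ∏ i, P i (x i) := by
  change (Measure.pi fun i => (P i).toMeasure) {x} = _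
  rw [← Set.univ_pi_singleton x, Measure.pi_pi]
  exact Finset.prod_congr rfl fun i _ =>
    (P i).toMeasure_apply_singleton _ (measurableSet_singleton _)

theorem privacyLoss_pi_ae (h : ∀ i, (P i).support ⊆ (Q i).support) :
    privacyLoss (PMF.pi P) (PMF.pi Q) =ᵐ[Measure.pi fun i => (P i).toMeasure]
      fun x => ∑ i, privacyLoss (P i) (Q i) (x i) := by
  rw [← PMF.toMeasure_pi]
  filter_upwards [(PMF.pi P).ae_apply_ne_zero] with x hx
  have hP : ∀ i, P i (x i) ≠ 0 := fun i hi =>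
    hx ((PMF.pi_apply x).trans (Finset.prod_eq_zero (Finset.mem_univ i) hi))
  have hQ : ∀ i, Q i (x i) ≠ 0 := fun i =>
    ((Q i).mem_support_iff _).mp (h i (((P i).mem_support_iff _).mpr (hP i)))
  have hratio : ∀ i, (P i (x i)).toReal / (Q i (x i)).toReal ≠ 0 := fun i =>
    div_ne_zero (ENNReal.toReal_ne_zero.mpr ⟨hP i, (P i).apply_ne_top _⟩)
      (ENNReal.toReal_ne_zero.mpr ⟨hQ i, (Q i).apply_ne_top _⟩)
  simp only [privacyLoss, PMF.pi_apply, ENNReal.toReal_prod, ← Finset.prod_div_distrib]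
  exact Real.log_prod fun i _ => hratio i

theorem integrable_privacyLoss_pi_iff (h : ∀ i, (P i).support ⊆ (Q i).support) :
    Integrable (privacyLoss (PMF.pi P) (PMF.pi Q)) (PMF.pi P).toMeasure ↔
      ∀ i, Integrable (privacyLoss (P i) (Q i)) (P i).toMeasure := by
  rw [PMF.toMeasure_pi, integrable_congr (privacyLoss_pi_ae h)]
  constructor
  · intro hint i
    have hneg : ∀ j ∈ Finset.univ, Integrable
        (fun x : ∀ i, A i => max (-privacyLoss (P j) (Q j) (x j)) 0)
        (Measure.pi fun i => (P i).toMeasure) :=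
      fun j _ => integrable_comp_eval (f := fun y => max (-privacyLoss (P j) (Q j) y) 0)
        (integrable_negPart_privacyLoss (h j))
    have := integrable_of_integrable_sum_of_negPart hint hneg (Finset.mem_univ i) .of_discrete
    exact ((measurePreserving_eval (fun i => (P i).toMeasure) i).integrable_comp
      (g := privacyLoss (P i) (Q i)) .of_discrete).mp this
  · exact fun hint => integrable_finsetSum _ fun i _ => integrable_comp_eval (hint i)

theorem KL_pi (h : ∀ i, (P i).support ⊆ (Q i).support)
    (hint : ∀ i, Integrable (privacyLoss (P i) (Q i)) (P i).toMeasure) :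
    KL (PMF.pi P) (PMF.pi Q) = ∑ i, KL (P i) (Q i) := by
  rw [KL_eq_integral, PMF.toMeasure_pi, integral_congr_ae (privacyLoss_pi_ae h),
    integral_finsetSum _ fun i _ => integrable_comp_eval (hint i)]
  exact Finset.sum_congr rfl fun i _ =>
    (integral_comp_eval .of_discrete).trans (KL_eq_integral _ _).symm

theorem KL_pi_of_not_integrable (h : ∀ i, (P i).support ⊆ (Q i).support)
    (hint : ¬ ∀ i, Integrable (privacyLoss (P i) (Q i)) (P i).toMeasure) :
    KL (PMF.pi P) (PMF.pi Q) = 0 := by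
  rw [KL_eq_integral, integral_undef ((integrable_privacyLoss_pi_iff h).not.mpr hint)]

theorem mgf_privacyLoss_pi (h : ∀ i, (P i).support ⊆ (Q i).support) (t : ℝ) :
    mgf (privacyLoss (PMF.pi P) (PMF.pi Q)) (PMF.pi P).toMeasure t =
      ∏ i, mgf (privacyLoss (P i) (Q i)) (P i).toMeasure t := by
  rw [PMF.toMeasure_pi, mgf_congr (privacyLoss_pi_ae h)]
  have hindep := iIndepFun_pi (μ := fun i => (P i).toMeasure)
    (X := fun i => privacyLoss (P i) (Q i)) fun i => .of_discrete
  have hfactor : ∀ i, mgf (fun x : ∀ i, A i => privacyLoss (P i) (Q i) (x i))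
      (Measure.pi fun i => (P i).toMeasure) t = mgf (privacyLoss (P i) (Q i)) (P i).toMeasure t :=
    fun i => integral_comp_eval (f := fun y => exp (t * privacyLoss (P i) (Q i) y)) .of_discrete
  rw [← Finset.prod_congr rfl fun i _ => hfactor i, ← hindep.mgf_sum (fun i => .of_discrete),
    Finset.sum_fn]

end Product

theorem cdp_composition_general (k : ℕ) {A : Fin k → Type*}
    [∀ i, Countable (A i)] [∀ i, MeasurableSpace (A i)] [∀ i, MeasurableSingletonClass (A i)]
    (P Q : ∀ i, PMF (A i)) (μ τ : Fin k → ℝ)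
    (hsupp : ∀ i, (P i).support = (Q i).support)
    (h : ∀ i, DsubG (P i) (Q i) (μ i) (τ i)) :
    DsubG (Measure.pi fun i => (P i).toMeasure).toPMF
      (Measure.pi fun i => (Q i).toMeasure).toPMF
      (∑ i, μ i) (Real.sqrt (∑ i, (τ i) ^ 2)) := by
  change DsubG (PMF.pi P) (PMF.pi Q) _ _
  have hsub : ∀ i, (P i).support ⊆ (Q i).support := fun i => (hsupp i).subset
  simp_rw [dsubG_iff, mgf_privacyLoss_pi hsub, sq_sqrt (Finset.sum_nonneg fun i _ => sq_nonneg _)]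
  by_cases hint : ∀ i, Integrable (privacyLoss (P i) (Q i)) (P i).toMeasure
  · rw [KL_pi hsub hint]
    refine ⟨Finset.sum_le_sum fun i _ => (h i).1, fun l => ?_⟩
    refine (mul_le_mul_of_nonneg_left (prod_mgf_privacyLoss_le h l) (exp_pos _).le).trans_eq ?_
    rw [← exp_add, neg_add_cancel_left]
  · rw [KL_pi_of_not_integrable hsub hint]
    refine ⟨(Finset.sum_nonneg fun i _ => KL_nonneg (hsub i)).trans
      (Finset.sum_le_sum fun i _ => (h i).1), fun l => ?_⟩
    rw [mul_zero, neg_zero, exp_zero, one_mul]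
    rcases le_or_gt l 0 with hl | hl
    · refine (prod_mgf_privacyLoss_le h l).trans (exp_le_exp.mpr ?_)
      have : l * ∑ i, KL (P i) (Q i) ≤ 0 :=
        mul_nonpos_of_nonpos_of_nonneg hl (Finset.sum_nonneg fun i _ => KL_nonneg (hsub i))
      linarith
    · obtain ⟨i, hi⟩ := not_forall.mp hint
      rw [Finset.prod_eq_zero (Finset.mem_univ i)
        (not_not.mp (mt (integrable_privacyLoss_of_mgf_ne_zero (hsub i) hl) hi))]
      exact (exp_pos _).le

/-- **Composition (product form) of concentrated differential privacy.** For discrete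
distributions `P i, Q i` with equal supports and `D_subG(P i‖Q i) ⪯ (μ i, τ i)` for each
`i < k`, the product distributions `P = ⊗ᵢ P i` and `Q = ⊗ᵢ Q i` satisfy
`D_subG(P‖Q) ⪯ (Σ μ i, sqrt (Σ (τ i)²))`. -/
theorem cdp_composition (k : ℕ) (hk : 0 < k) {A : Fin k → Type*}
    [∀ i, Countable (A i)] [∀ i, MeasurableSpace (A i)] [∀ i, MeasurableSingletonClass (A i)]
    (P Q : ∀ i, PMF (A i)) (μ τ : Fin k → ℝ)
    (hsupp : ∀ i, (P i).support = (Q i).support)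
    (h : ∀ i, DsubG (P i) (Q i) (μ i) (τ i)) :
    DsubG (Measure.pi fun i => (P i).toMeasure).toPMF
      (Measure.pi fun i => (Q i).toMeasure).toPMF
      (∑ i, μ i) (Real.sqrt (∑ i, (τ i) ^ 2)) :=
  cdp_composition_general k P Q μ τ hsupp h
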